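/- arXiv:2310.08416 — 2 statements merged into one kernel-verified Lean document; each statement's English description precedes it below -/
import Mathlib

section
/- Let v_1, …, v_k be linearly independent unit vectors in ℝ^k with Δ = Δ(V) the volume of the parallelepiped they generate. For s ∈ ℝ^k, write ‖s‖_Λ = max_n |⟨s, v_n⟩| and let F(s) = γ_k({r ∈ ℝ^k : |⟨r, v_n⟩| ≤ |⟨s, v_n⟩| for all 1 ≤ n ≤ k}), the Gaussian mass of the interior of the parallelepiped centred at the origin whose faces are normal to the v_n and distance 2|⟨s, v_n⟩| apart. Then for every s ∈ ℝ^k, F(s) ≤ Δ^{−1} ∏_{n=1}^k (2|⟨s, v_n⟩|/√(2π)), and there exists a constant C > 0 (depending only on v_1, …, v_k) such that F(s) ≥ (1 − C‖s‖_Λ²) · Δ^{−1} ∏_{n=1}^k (2|⟨s, v_n⟩|/√(2π)) for all s ∈ ℝ^k. -/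
open MeasureTheory Filter
open scoped RealInnerProductSpace Real ENNReal NNReal

/-- The standard Gaussian measure on `ℝ^m`, i.e. the `m`-fold product of `N(0,1)`,
viewed as a measure on Euclidean space. -/
noncomputable def stdGaussian (m : ℕ) : Measure (EuclideanSpace ℝ (Fin m)) :=
  (Measure.pi fun _ : Fin m => ProbabilityTheory.gaussianReal 0 1).map
    (MeasurableEquiv.toLp 2 (Fin m → ℝ))

/-- `Φ_m t`: the cumulative distribution function of the length of a standard
Gaussian vector in `ℝ^m`. -/
noncomputable def Phi (m : ℕ) (t : ℝ) : ℝ :=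
  (stdGaussian m {x | ‖x‖ ≤ t}).toReal

/-- The Beta function `B(x, y) = Γ(x)Γ(y)/Γ(x+y)`. -/
noncomputable def realBeta (x y : ℝ) : ℝ :=
  Real.Gamma x * Real.Gamma y / Real.Gamma (x + y)

/-
The standard Gaussian density `(2π)^{-k/2} e^{-‖r‖²/2}` lies between `(2π)^{-k/2} (1 - ‖r‖²/2)`
and `(2π)^{-k/2}`, so `F s` is squeezed between these constants times the volume of the
parallelepiped. That parallelepiped is the preimage of the box `∏ₙ [-|⟪s, vₙ⟫|, |⟪s, vₙ⟫|]` under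
the matrix `A` with rows `vₙ`, hence has volume `|det A|⁻¹ ∏ₙ 2|⟪s, vₙ⟫|`, and
`|det A| = √(det (A Aᵀ)) = Δ`. As `A` is invertible, `‖r‖ ≤ K maxₙ |⟪r, vₙ⟫| ≤ K ‖s‖_Λ` on the
parallelepiped, which gives the lower bound with `C = K²/2`.
-/

open scoped Matrix
open ProbabilityTheory (gaussianReal gaussianPDFReal integrable_gaussianPDFReal
  gaussianPDFReal_nonneg gaussianReal_apply_eq_integral)

lemma Set.indicator_univ_pi_prod {ι M₀ : Type*} {α : ι → Type*} [Fintype ι] [CommMonoidWithZero M₀]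
    (s : ∀ i, Set (α i)) (f : ∀ i, α i → M₀) (x : ∀ i, α i) :
    (Set.univ.pi s).indicator (fun x => ∏ i, f i (x i)) x = ∏ i, (s i).indicator (f i) (x i) := by
  by_cases hx : x ∈ Set.univ.pi s
  · rw [Set.indicator_of_mem hx]
    exact Finset.prod_congr rfl fun i _ => (Set.indicator_of_mem (hx i trivial) _).symm
  · obtain ⟨i, -, hi⟩ := not_forall₂.mp hx
    rw [Set.indicator_of_notMem hx,
      Finset.prod_eq_zero (Finset.mem_univ i) (Set.indicator_of_notMem hi _)]

lemma MeasureTheory.Measure.pi_gaussianReal_eq_withDensity (ι : Type*) [Fintype ι] :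
    Measure.pi (fun _ : ι => gaussianReal 0 1) =
      volume.withDensity fun x => ENNReal.ofReal (∏ i, gaussianPDFReal 0 1 (x i)) := by
  refine Measure.pi_eq fun s hs => ?_
  have hint (i : ι) : Integrable ((s i).indicator (gaussianPDFReal 0 1)) :=
    (integrable_gaussianPDFReal 0 1).indicator (hs i)
  have hnonneg (i : ι) : 0 ≤ (s i).indicator (gaussianPDFReal 0 1) :=
    Set.indicator_nonneg fun y _ => gaussianPDFReal_nonneg 0 1 y
  calc volume.withDensity (fun x => ENNReal.ofReal (∏ i, gaussianPDFReal 0 1 (x i)))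
        (Set.univ.pi s)
      = ∫⁻ x : ι → ℝ, ENNReal.ofReal (∏ i, (s i).indicator (gaussianPDFReal 0 1) (x i)) := by
        rw [withDensity_apply _ (.univ_pi hs), ← lintegral_indicator (.univ_pi hs)]
        refine lintegral_congr fun x => ?_
        rw [← Set.indicator_univ_pi_prod]
        exact congrFun (Set.indicator_comp_of_zero ENNReal.ofReal_zero) x
    _ = ENNReal.ofReal (∏ i, ∫ y, (s i).indicator (gaussianPDFReal 0 1) y) := by
        rw [← integral_fintype_prod_volume_eq_prod]
        exact (ofReal_integral_eq_lintegral_ofReal (Integrable.fintype_prod hint)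
          (ae_of_all _ fun x => Finset.prod_nonneg fun i _ => hnonneg i _)).symm
    _ = ∏ i, gaussianReal 0 1 (s i) := by
        rw [ENNReal.ofReal_prod_of_nonneg fun i _ => integral_nonneg (hnonneg i)]
        refine Finset.prod_congr rfl fun i _ => ?_
        rw [gaussianReal_apply_eq_integral 0 one_ne_zero (s i), integral_indicator (hs i)]

noncomputable def stdGaussianPDFReal (m : ℕ) (x : EuclideanSpace ℝ (Fin m)) : ℝ :=
  (√(2 * π))⁻¹ ^ m * Real.exp (-‖x‖ ^ 2 / 2)

lemma prod_gaussianPDFReal_eq_stdGaussianPDFReal {m : ℕ} (x : Fin m → ℝ) :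
    ∏ i, gaussianPDFReal 0 1 (x i) = stdGaussianPDFReal m (WithLp.toLp 2 x) := by
  simp only [gaussianPDFReal, stdGaussianPDFReal, EuclideanSpace.norm_sq_eq, NNReal.coe_one,
    mul_one, sub_zero, Real.norm_eq_abs, sq_abs, Finset.prod_mul_distrib, Finset.prod_const,
    Finset.card_univ, Fintype.card_fin, ← Real.exp_sum, ← Finset.sum_div, Finset.sum_neg_distrib]

lemma stdGaussian_apply {m : ℕ} {S : Set (EuclideanSpace ℝ (Fin m))} (hS : MeasurableSet S) :
    stdGaussian m S = ∫⁻ x in S, ENNReal.ofReal (stdGaussianPDFReal m x) := by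
  rw [stdGaussian, Measure.map_apply (MeasurableEquiv.measurable _) hS,
    Measure.pi_gaussianReal_eq_withDensity, withDensity_apply _ (hS.preimage (by fun_prop))]
  simp_rw [prod_gaussianPDFReal_eq_stdGaussianPDFReal]
  exact (PiLp.volume_preserving_toLp (Fin m)).setLIntegral_comp_preimage_emb
    (MeasurableEquiv.toLp 2 (Fin m → ℝ)).measurableEmbedding
    (fun x => ENNReal.ofReal (stdGaussianPDFReal m x)) S

instance isProbabilityMeasure_stdGaussian (m : ℕ) : IsProbabilityMeasure (stdGaussian m) :=
  Measure.isProbabilityMeasure_map (MeasurableEquiv.measurable _).aemeasurable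

lemma stdGaussianPDFReal_le (m : ℕ) (x : EuclideanSpace ℝ (Fin m)) :
    stdGaussianPDFReal m x ≤ (√(2 * π))⁻¹ ^ m :=
  mul_le_of_le_one_right (by positivity) (Real.exp_le_one_iff.mpr (by nlinarith [sq_nonneg ‖x‖]))

lemma mul_one_sub_le_stdGaussianPDFReal (m : ℕ) (x : EuclideanSpace ℝ (Fin m)) :
    (√(2 * π))⁻¹ ^ m * (1 - ‖x‖ ^ 2 / 2) ≤ stdGaussianPDFReal m x :=
  mul_le_mul_of_nonneg_left (by linarith [Real.add_one_le_exp (-‖x‖ ^ 2 / 2)]) (by positivity)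

lemma stdGaussian_toReal_le_mul_volume {m : ℕ} {S : Set (EuclideanSpace ℝ (Fin m))}
    (hS : MeasurableSet S) (hS' : volume S ≠ ∞) :
    (stdGaussian m S).toReal ≤ (√(2 * π))⁻¹ ^ m * (volume S).toReal := by
  have : stdGaussian m S ≤ ENNReal.ofReal ((√(2 * π))⁻¹ ^ m) * volume S := by
    rw [stdGaussian_apply hS, ← setLIntegral_const]
    exact setLIntegral_mono measurable_const fun x _ =>
      ENNReal.ofReal_le_ofReal (stdGaussianPDFReal_le m x)
  rw [← ENNReal.toReal_ofReal (by positivity : (0 : ℝ) ≤ (√(2 * π))⁻¹ ^ m), ← ENNReal.toReal_mul]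
  exact ENNReal.toReal_mono (ENNReal.mul_ne_top ENNReal.ofReal_ne_top hS') this

lemma one_sub_mul_le_stdGaussian_toReal {m : ℕ} {S : Set (EuclideanSpace ℝ (Fin m))}
    (hS : MeasurableSet S) {t : ℝ} (ht : ∀ x ∈ S, ‖x‖ ^ 2 / 2 ≤ t) :
    (1 - t) * ((√(2 * π))⁻¹ ^ m * (volume S).toReal) ≤ (stdGaussian m S).toReal := by
  have : ENNReal.ofReal ((√(2 * π))⁻¹ ^ m * (1 - t)) * volume S ≤ stdGaussian m S := by
    rw [stdGaussian_apply hS, ← setLIntegral_const]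
    refine setLIntegral_mono (by unfold stdGaussianPDFReal; fun_prop) fun x hx =>
      ENNReal.ofReal_le_ofReal ((mul_le_mul_of_nonneg_left ?_ (by positivity)).trans
        (mul_one_sub_le_stdGaussianPDFReal m x))
    linarith [ht x hx]
  calc _ ≤ max ((√(2 * π))⁻¹ ^ m * (1 - t)) 0 * (volume S).toReal := by
        rw [← mul_assoc, mul_comm (1 - t)]
        gcongr
        exact le_max_left _ _
    _ ≤ (stdGaussian m S).toReal := by
        rw [← ENNReal.toReal_ofReal', ← ENNReal.toReal_mul]
        exact ENNReal.toReal_mono (measure_ne_top _ _) this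

section Parallelepiped

variable {ι : Type*} [Fintype ι]

def rowMatrix (v : ι → EuclideanSpace ℝ ι) : Matrix ι ι ℝ := Matrix.of fun n i => v n i

lemma gram_eq_rowMatrix_mul_transpose (v : ι → EuclideanSpace ℝ ι) :
    Matrix.gram ℝ v = rowMatrix v * (rowMatrix v)ᵀ := by
  ext m n
  simp [Matrix.gram, rowMatrix, Matrix.mul_apply, PiLp.inner_apply, mul_comm]

lemma volume_setOf_forall_abs_le (a : ι → ℝ) (ha : ∀ n, 0 ≤ a n) :
    volume {x : EuclideanSpace ℝ ι | ∀ n, |x n| ≤ a n} = ENNReal.ofReal (∏ n, 2 * a n) := by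
  have : {x : EuclideanSpace ℝ ι | ∀ n, |x n| ≤ a n} =
      WithLp.ofLp ⁻¹' Set.univ.pi fun n => Set.Icc (-a n) (a n) := by
    ext x
    simp only [Set.mem_ofPred_eq, Set.mem_preimage, Set.mem_univ_pi, Set.mem_Icc, abs_le]
  rw [this, (PiLp.volume_preserving_ofLp ι).measure_preimage
    (MeasurableSet.univ_pi fun n => measurableSet_Icc).nullMeasurableSet, volume_pi_pi,
    ENNReal.ofReal_prod_of_nonneg fun n _ => by linarith [ha n]]
  simp_rw [Real.volume_Icc, sub_neg_eq_add, two_mul]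

lemma measurableSet_setOf_forall_abs_inner_le (v : ι → EuclideanSpace ℝ ι) (a : ι → ℝ) :
    MeasurableSet {r : EuclideanSpace ℝ ι | ∀ n, |⟪r, v n⟫| ≤ a n} := by
  simp only [Set.ofPred_forall]
  exact MeasurableSet.iInter fun n => measurableSet_le (by fun_prop) measurable_const

variable [DecidableEq ι]

lemma det_rowMatrix_ne_zero {v : ι → EuclideanSpace ℝ ι} (hv : LinearIndependent ℝ v) :
    (rowMatrix v).det ≠ 0 := by
  have := Matrix.det_gram_ne_zero_iff_linearIndependent.mpr hv
  rw [gram_eq_rowMatrix_mul_transpose, Matrix.det_mul, Matrix.det_transpose] at this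
  exact left_ne_zero_of_mul this

lemma sqrt_det_gram_eq_abs_det_rowMatrix (v : ι → EuclideanSpace ℝ ι) :
    √(Matrix.gram ℝ v).det = |(rowMatrix v).det| := by
  rw [gram_eq_rowMatrix_mul_transpose, Matrix.det_mul, Matrix.det_transpose,
    Real.sqrt_mul_self_eq_abs]

lemma toEuclideanLin_rowMatrix_apply (v : ι → EuclideanSpace ℝ ι) (r : EuclideanSpace ℝ ι) (n : ι) :
    Matrix.toEuclideanLin (rowMatrix v) r n = ⟪r, v n⟫ := by
  simp [rowMatrix, Matrix.mulVec, dotProduct, PiLp.inner_apply, mul_comm]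

lemma Matrix.det_toEuclideanLin (A : Matrix ι ι ℝ) :
    LinearMap.det (Matrix.toEuclideanLin A) = A.det := by
  rw [← LinearMap.det_toLin' A, ← LinearMap.det_conj _ (WithLp.linearEquiv 2 ℝ (ι → ℝ)).symm]
  rfl

lemma volume_setOf_forall_abs_inner_le {v : ι → EuclideanSpace ℝ ι} (hv : LinearIndependent ℝ v)
    (a : ι → ℝ) (ha : ∀ n, 0 ≤ a n) :
    volume {r : EuclideanSpace ℝ ι | ∀ n, |⟪r, v n⟫| ≤ a n} =
      ENNReal.ofReal ((√(Matrix.gram ℝ v).det)⁻¹ * ∏ n, 2 * a n) := by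
  have hdet := (Matrix.det_toEuclideanLin (rowMatrix v)).trans_ne (det_rowMatrix_ne_zero hv)
  have : {r : EuclideanSpace ℝ ι | ∀ n, |⟪r, v n⟫| ≤ a n} =
      Matrix.toEuclideanLin (rowMatrix v) ⁻¹' {x | ∀ n, |x n| ≤ a n} := by
    simp only [Set.preimage_ofPred_eq, toEuclideanLin_rowMatrix_apply]
  rw [this, Measure.addHaar_preimage_linearMap _ hdet, volume_setOf_forall_abs_le a ha,
    ← ENNReal.ofReal_mul (abs_nonneg _), Matrix.det_toEuclideanLin,
    sqrt_det_gram_eq_abs_det_rowMatrix, abs_inv]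

lemma exists_norm_le_mul_iSup_abs_inner {v : ι → EuclideanSpace ℝ ι}
    (hv : LinearIndependent ℝ v) : ∃ K > 0, ∀ r, ‖r‖ ≤ K * ⨆ n, |⟪r, v n⟫| := by
  set T := Matrix.toEuclideanLin (rowMatrix v)
  have hT : Function.Injective T := (T.equivOfDetNeZero
    ((Matrix.det_toEuclideanLin _).trans_ne (det_rowMatrix_ne_zero hv))).injective
  set S := (WithLp.linearEquiv 2 ℝ (ι → ℝ)).toLinearMap ∘ₗ T
  obtain ⟨K, hK0, hK⟩ := S.exists_antilipschitzWith
    (LinearMap.ker_eq_bot.mpr ((WithLp.linearEquiv 2 ℝ (ι → ℝ)).injective.comp hT))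
  refine ⟨K, hK0, fun r => ?_⟩
  have hS : ‖S r‖ ≤ ⨆ n, |⟪r, v n⟫| := by
    refine (pi_norm_le_iff_of_nonneg (Real.iSup_nonneg fun n => abs_nonneg _)).mpr fun n => ?_
    have : S r n = ⟪r, v n⟫ := toEuclideanLin_rowMatrix_apply v r n
    rw [this, Real.norm_eq_abs]
    exact le_ciSup (Set.finite_range fun n => |⟪r, v n⟫|).bddAbove n
  calc ‖r‖ = dist r 0 := (dist_zero_right r).symm
    _ ≤ K * dist (S r) (S 0) := hK.le_mul_dist r 0
    _ = K * ‖S r‖ := by rw [map_zero, dist_zero_right]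
    _ ≤ K * ⨆ n, |⟪r, v n⟫| := by gcongr

end Parallelepiped

theorem stmt_4_general (k : ℕ)
    (v : Fin k → EuclideanSpace ℝ (Fin k))
    (hli : LinearIndependent ℝ v)
    (Δ : ℝ)
    (hΔ : Δ = Real.sqrt (Matrix.det (Matrix.of fun m n : Fin k => (⟪v m, v n⟫ : ℝ))))
    (F : EuclideanSpace ℝ (Fin k) → ℝ)
    (hF : ∀ s, F s = (stdGaussian k {r | ∀ n, |⟪r, v n⟫| ≤ |⟪s, v n⟫|}).toReal) :
    (∀ s, F s ≤ Δ⁻¹ * ∏ n, (2 * |⟪s, v n⟫| / Real.sqrt (2 * Real.pi))) ∧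
    ∃ C > (0 : ℝ), ∀ s,
      (1 - C * (⨆ n, |⟪s, v n⟫|) ^ 2) *
        (Δ⁻¹ * ∏ n, (2 * |⟪s, v n⟫| / Real.sqrt (2 * Real.pi))) ≤ F s := by
  set P := fun s : EuclideanSpace ℝ (Fin k) => {r | ∀ n, |⟪r, v n⟫| ≤ |⟪s, v n⟫|}
  set V := fun s : EuclideanSpace ℝ (Fin k) => Δ⁻¹ * ∏ n, 2 * |⟪s, v n⟫|
  have hP (s) : MeasurableSet (P s) := measurableSet_setOf_forall_abs_inner_le v _
  have hV (s) : 0 ≤ V s := by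
    have : 0 ≤ Δ := hΔ ▸ Real.sqrt_nonneg _
    positivity
  have hvol (s) : volume (P s) = ENNReal.ofReal (V s) := by
    simp only [V, hΔ]
    exact volume_setOf_forall_abs_inner_le hli _ fun n => abs_nonneg _
  have hscale (s) : Δ⁻¹ * ∏ n, (2 * |⟪s, v n⟫| / √(2 * π)) = (√(2 * π))⁻¹ ^ k * V s := by
    simp only [V, Finset.prod_div_distrib, Finset.prod_const, Finset.card_univ, Fintype.card_fin,
      inv_pow]
    ring
  obtain ⟨K, hK0, hK⟩ := exists_norm_le_mul_iSup_abs_inner hli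
  refine ⟨fun s => ?_, K ^ 2 / 2, by positivity, fun s => ?_⟩
  · rw [hF, hscale, ← ENNReal.toReal_ofReal (hV s), ← hvol]
    exact stdGaussian_toReal_le_mul_volume (hP s) ((hvol s).trans_ne ENNReal.ofReal_ne_top)
  · have hR (r) (hr : r ∈ P s) : ‖r‖ ^ 2 / 2 ≤ K ^ 2 / 2 * (⨆ n, |⟪s, v n⟫|) ^ 2 := by
      have : ‖r‖ ≤ K * ⨆ n, |⟪s, v n⟫| :=
        (hK r).trans <|
          mul_le_mul_of_nonneg_left (ciSup_mono (Set.finite_range _).bddAbove hr) hK0.le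
      nlinarith [norm_nonneg r]
    rw [hF, hscale, ← ENNReal.toReal_ofReal (hV s), ← hvol]
    exact one_sub_mul_le_stdGaussian_toReal (hP s) hR

/-- For linearly independent unit vectors `v 0, …, v (k-1)` in `ℝ^k`
generating a parallelepiped of volume `Δ`, the Gaussian mass `F s` of the interior
of the parallelepiped with faces normal to the `v n` at distance `2|⟨s, v n⟩|`
satisfies `F s ≤ Δ⁻¹ ∏ n, (2|⟨s, v n⟩|/√(2π))` for all `s`, and
`F s ≥ (1 - C ‖s‖_Λ²) Δ⁻¹ ∏ n, (2|⟨s, v n⟩|/√(2π))` for some constant `C > 0`. -/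
theorem stmt_4 (k : ℕ) (hk : 0 < k)
    (v : Fin k → EuclideanSpace ℝ (Fin k))
    (hunit : ∀ n, ‖v n‖ = 1)
    (hli : LinearIndependent ℝ v)
    (Δ : ℝ)
    (hΔ : Δ = Real.sqrt (Matrix.det (Matrix.of fun m n : Fin k => (⟪v m, v n⟫ : ℝ))))
    (F : EuclideanSpace ℝ (Fin k) → ℝ)
    (hF : ∀ s, F s = (stdGaussian k {r | ∀ n, |⟪r, v n⟫| ≤ |⟪s, v n⟫|}).toReal) :
    (∀ s, F s ≤ Δ⁻¹ * ∏ n, (2 * |⟪s, v n⟫| / Real.sqrt (2 * Real.pi))) ∧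
    ∃ C > (0 : ℝ), ∀ s,
      (1 - C * (⨆ n, |⟪s, v n⟫|) ^ 2) *
        (Δ⁻¹ * ∏ n, (2 * |⟪s, v n⟫| / Real.sqrt (2 * Real.pi))) ≤ F s :=
  stmt_4_general k v hli Δ hΔ F hF
end

section
/- Let v_1, …, v_k be linearly independent unit vectors in ℝ^d. Then for every t > 0, Φ_k(t) ≤ γ_d({s ∈ ℝ^d : |⟨s, v_n⟩| < t for all 1 ≤ n ≤ k}) ≤ Φ_1(t). -/
open MeasureTheory Filter
open scoped RealInnerProductSpace Real ENNReal NNReal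

/-!
The projection `P` onto `W = span {v n}` pushes `γ_d` forward to the standard Gaussian of the
`k`-dimensional space `W`, and `|⟪s, v n⟫| = |⟪P s, v n⟫| ≤ ‖P s‖`; hence the preimage under `P` of
the open ball of radius `t` lies inside the intersection of the slabs, and the open ball has the
same measure as the closed one because spheres are Lebesgue-null. For the upper bound, drop all
constraints but one: `⟪·, v 0⟫` is a standard normal variable under `γ_d`, and so is the single coordinate of `γ_1`.
-/

open ProbabilityTheory hiding stdGaussian

theorem stdGaussian_eq_stdGaussian (m : ℕ) :
    stdGaussian m = ProbabilityTheory.stdGaussian (EuclideanSpace ℝ (Fin m)) :=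
  map_pi_eq_stdGaussian

theorem MeasureTheory.Measure.AbsolutelyContinuous.pi_fin {n : ℕ} {α : Fin n → Type*}
    [∀ i, MeasurableSpace (α i)] {μ ν : ∀ i, Measure (α i)} [∀ i, SigmaFinite (μ i)]
    [∀ i, SigmaFinite (ν i)] (h : ∀ i, μ i ≪ ν i) : Measure.pi μ ≪ Measure.pi ν := by
  induction n with
  | zero => rw [Measure.pi_of_empty μ, Measure.pi_of_empty ν]
  | succ n ih =>
    rw [← (measurePreserving_piFinSuccAbove μ 0).symm.map_eq,
      ← (measurePreserving_piFinSuccAbove ν 0).symm.map_eq]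
    exact ((h 0).prod (ih fun i => h _)).map (MeasurableEquiv.measurable _)

theorem stdGaussian_absolutelyContinuous (m : ℕ) : stdGaussian m ≪ volume := by
  rw [← (EuclideanSpace.volume_preserving_symm_measurableEquiv_toLp (Fin m)).symm.map_eq]
  exact (Measure.AbsolutelyContinuous.pi_fin fun _ => gaussianReal_absolutelyContinuous 0
    one_ne_zero).map (MeasurableEquiv.measurable _)

theorem stdGaussian_norm_lt_eq_norm_le {m : ℕ} (hm : 0 < m) (t : ℝ) :
    stdGaussian m {x | ‖x‖ < t} = stdGaussian m {x | ‖x‖ ≤ t} := by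
  have : Nontrivial (EuclideanSpace ℝ (Fin m)) := by
    have : Nonempty (Fin m) := ⟨⟨0, hm⟩⟩
    infer_instance
  have hsphere : stdGaussian m (Metric.sphere 0 t) = 0 :=
    stdGaussian_absolutelyContinuous m (Measure.addHaar_sphere volume 0 t)
  refine le_antisymm (measure_mono fun x (hx : ‖x‖ < t) => hx.le) ?_
  calc stdGaussian m {x | ‖x‖ ≤ t} ≤ stdGaussian m ({x | ‖x‖ < t} ∪ Metric.sphere 0 t) :=
        measure_mono fun x (hx : ‖x‖ ≤ t) => by simpa using hx.lt_or_eq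
    _ ≤ stdGaussian m {x | ‖x‖ < t} + stdGaussian m (Metric.sphere 0 t) := measure_union_le _ _
    _ = stdGaussian m {x | ‖x‖ < t} := by rw [hsphere, add_zero]

section InnerProductSpace

variable {E : Type*} [NormedAddCommGroup E] [InnerProductSpace ℝ E] [FiniteDimensional ℝ E]
  [MeasurableSpace E] [BorelSpace E]

theorem map_inner_stdGaussian {u : E} (hu : ‖u‖ = 1) :
    (ProbabilityTheory.stdGaussian E).map (fun x => ⟪x, u⟫) = gaussianReal 0 1 := by
  have h := IsGaussian.map_eq_gaussianReal (μ := ProbabilityTheory.stdGaussian E) (innerSL ℝ u)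
  rw [integral_strongDual_stdGaussian, variance_dual_stdGaussian, innerSL_apply_norm, hu] at h
  have hfun : (fun x : E => ⟪x, u⟫) = innerSL ℝ u := funext fun x => real_inner_comm u x
  rw [hfun, h]
  norm_num

theorem map_orthogonalProjectionOnto_stdGaussian (W : Submodule ℝ E) :
    (ProbabilityTheory.stdGaussian E).map W.orthogonalProjectionOnto
      = ProbabilityTheory.stdGaussian W := by
  refine Measure.ext_of_charFun (funext fun w => ?_)
  rw [charFun_apply, integral_map (by fun_prop) (by fun_prop), charFun_stdGaussian]
  simp_rw [Submodule.inner_orthogonalProjectionOnto_eq_of_mem_right]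
  rw [← charFun_apply, charFun_stdGaussian, Submodule.coe_norm]

theorem stdGaussian_norm_lt_le_abs_inner_lt {k : ℕ} {v : Fin k → E}
    (hunit : ∀ n, ‖v n‖ = 1) (hli : LinearIndependent ℝ v) (t : ℝ) :
    stdGaussian k {z | ‖z‖ < t}
      ≤ ProbabilityTheory.stdGaussian E {s | ∀ n, |⟪s, v n⟫| < t} := by
  set W := Submodule.span ℝ (Set.range v)
  have hW : Module.finrank ℝ W = k := by rw [finrank_span_eq_card hli, Fintype.card_fin]
  let e : W ≃ₗᵢ[ℝ] EuclideanSpace ℝ (Fin k) :=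
    ((stdOrthonormalBasis ℝ W).reindex (finCongr hW)).repr
  have hmap : stdGaussian k
      = (ProbabilityTheory.stdGaussian E).map (e ∘ W.orthogonalProjectionOnto) := by
    rw [← Measure.map_map (by fun_prop) (by fun_prop), map_orthogonalProjectionOnto_stdGaussian,
      stdGaussian_map, stdGaussian_eq_stdGaussian]
  rw [hmap, Measure.map_apply (by fun_prop) (measurableSet_lt (by fun_prop) (by fun_prop))]
  refine measure_mono fun s (hs : ‖e (W.orthogonalProjectionOnto s)‖ < t) n => ?_
  have hvW : v n ∈ W := Submodule.subset_span ⟨n, rfl⟩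
  calc |⟪s, v n⟫| = |⟪(W.orthogonalProjectionOnto s : E), v n⟫| := by
        rw [← Submodule.inner_orthogonalProjectionOnto_eq_of_mem_right ⟨v n, hvW⟩]; rfl
    _ ≤ ‖W.orthogonalProjectionOnto s‖ * ‖v n‖ := abs_real_inner_le_norm _ _
    _ < t := by rwa [hunit, mul_one, ← e.norm_map]

end InnerProductSpace

theorem Phi_one_eq_gaussianReal (t : ℝ) : Phi 1 t = (gaussianReal 0 1 {y | |y| ≤ t}).toReal := by
  set u : EuclideanSpace ℝ (Fin 1) := EuclideanSpace.single 0 1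
  have hu : ‖u‖ = 1 := by simp [u]
  have hnorm : ∀ x : EuclideanSpace ℝ (Fin 1), ‖x‖ = |⟪x, u⟫| := by
    intro x
    simp [u, EuclideanSpace.norm_eq, EuclideanSpace.inner_single_right, Real.sqrt_sq_eq_abs]
  rw [Phi, ← map_inner_stdGaussian hu, Measure.map_apply (by fun_prop)
    (measurableSet_le (by fun_prop) (by fun_prop)), stdGaussian_eq_stdGaussian]
  simp_rw [hnorm]
  rfl

theorem stmt_12_general (k d : ℕ) (hk : 0 < k)
    (v : Fin k → EuclideanSpace ℝ (Fin d))
    (hunit : ∀ n, ‖v n‖ = 1)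
    (hli : LinearIndependent ℝ v) :
    ∀ t : ℝ, 0 < t →
      Phi k t ≤ (stdGaussian d {s | ∀ n, |⟪s, v n⟫| < t}).toReal ∧
      (stdGaussian d {s | ∀ n, |⟪s, v n⟫| < t}).toReal ≤ Phi 1 t := by
  intro t _
  rw [stdGaussian_eq_stdGaussian d]
  refine ⟨?_, ?_⟩
  · rw [Phi, ← stdGaussian_norm_lt_eq_norm_le hk]
    exact ENNReal.toReal_mono (measure_ne_top _ _)
      (stdGaussian_norm_lt_le_abs_inner_lt hunit hli t)
  · rw [Phi_one_eq_gaussianReal]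
    refine ENNReal.toReal_mono (measure_ne_top _ _) ?_
    calc ProbabilityTheory.stdGaussian _ {s | ∀ n, |⟪s, v n⟫| < t}
        ≤ ProbabilityTheory.stdGaussian _ ((fun s => ⟪s, v ⟨0, hk⟩⟫) ⁻¹' {y | |y| ≤ t}) :=
          measure_mono fun s hs => (hs ⟨0, hk⟩).le
      _ = gaussianReal 0 1 {y | |y| ≤ t} := by
          rw [← Measure.map_apply (by fun_prop) (measurableSet_le (by fun_prop) (by fun_prop)),
            map_inner_stdGaussian (hunit _)]

/-- For linearly independent unit vectors `v 0, …, v (k-1)` in `ℝ^d`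
and every `t > 0`, `Φ_k(t) ≤ γ_d({s : |⟨s, v n⟩| < t for all n}) ≤ Φ_1(t)`. -/
theorem stmt_12 (k d : ℕ) (hk : 0 < k) (hd : 0 < d)
    (v : Fin k → EuclideanSpace ℝ (Fin d))
    (hunit : ∀ n, ‖v n‖ = 1)
    (hli : LinearIndependent ℝ v) :
    ∀ t : ℝ, 0 < t →
      Phi k t ≤ (stdGaussian d {s | ∀ n, |⟪s, v n⟫| < t}).toReal ∧
      (stdGaussian d {s | ∀ n, |⟪s, v n⟫| < t}).toReal ≤ Phi 1 t :=
  stmt_12_general k d hk v hunit hli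
end
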